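/- Let a > 0 be real. For every complex number x, the monic Charlier polynomials Ĉ_n(x;a) = (−a)^n C_n(x;a) satisfy lim_{n→∞} (−1)^n · Ĉ_n(x;a)/Γ(n−x) = e^a/Γ(−x), where 1/Γ(−x) is interpreted as 0 when −x is a nonpositive integer. -/

import Mathlib

open Filter Topology Finset

/-- The Pochhammer symbol (rising factorial) `(u)_k = u (u+1) ⋯ (u+k-1)`, with `(u)_0 = 1`. -/
noncomputable def poch (u : ℂ) (k : ℕ) : ℂ := ∏ i ∈ range k, (u + i)

/-- The Charlier polynomial `C_n(x; a) = ∑_{j=0}^n (−n)_j (−x)_j / j! · (−1/a)^j`. -/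
noncomputable def charlier (a : ℝ) (n : ℕ) (x : ℂ) : ℂ :=
  ∑ j ∈ range (n + 1),
    poch (-(n : ℂ)) j * poch (-x) j / (j.factorial : ℂ) * (-(1 / (a : ℂ))) ^ j

/-- The monic Charlier polynomial `Ĉ_n(x;a) = (−a)ⁿ C_n(x;a)`. -/
noncomputable def monicCharlier (a : ℝ) (n : ℕ) (x : ℂ) : ℂ :=
  (-(a : ℂ)) ^ n * charlier a n x

/-!
Since `(-n)_j (-1)^j = n! / (n-j)!`, reindexing the sum gives
`(-1)ⁿ Ĉ_n(x;a) = ∑_k C(n,k) a^k (-x)_{n-k}`.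
If `x ∉ ℕ`, then `Γ(n-x) = Γ(-x) (-x)_{n-k} (n-k-x)_k`, so the `k`-th term divided by `Γ(n-x)` is
`a^k / (k! Γ(-x)) · ∏_{i<k} (n-k+i+1)/(n-k+i-x)`. Each factor of the product tends to `1` and
all of them are bounded by one constant `C`, so Tannery's theorem gives the limit
`∑_k a^k / (k! Γ(-x)) = e^a / Γ(-x)`.
If `x = p ∈ ℕ`, then `|(-p)_j| ≤ p!`, so `|Ĉ_n(p;a)| ≤ p! (1+|a|)^n`, while `Γ(n-p) = (n-p-1)!`.
-/

open scoped Nat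

lemma poch_succ (u : ℂ) (k : ℕ) : poch u (k + 1) = poch u k * (u + k) :=
  prod_range_succ _ _

lemma poch_neg_natCast (n j : ℕ) : poch (-n) j = (-1) ^ j * n.descFactorial j := by
  induction j with
  | zero => simp [poch]
  | succ j ih =>
    rw [poch_succ, ih, Nat.descFactorial_succ]
    rcases le_or_gt j n with h | h
    · push_cast [Nat.cast_sub h]
      ring
    · simp [Nat.descFactorial_eq_zero_iff_lt.mpr h]

lemma norm_poch_neg_natCast_le (p j : ℕ) : ‖poch (-p) j‖ ≤ p ! := by
  rw [poch_neg_natCast, norm_mul, norm_pow, norm_neg, norm_one, one_pow, one_mul,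
    Complex.norm_natCast, Nat.cast_le]
  rcases le_or_gt j p with h | h
  · rw [← Nat.factorial_mul_descFactorial h]
    exact Nat.le_mul_of_pos_left _ (Nat.factorial_pos _)
  · simp [Nat.descFactorial_eq_zero_iff_lt.mpr h]

lemma neg_one_pow_mul_monicCharlier {a : ℝ} (ha : a ≠ 0) (n : ℕ) (x : ℂ) :
    (-1) ^ n * monicCharlier a n x =
      ∑ k ∈ range (n + 1), (n.choose k : ℂ) * a ^ k * poch (-x) (n - k) := by
  rw [monicCharlier, charlier, ← mul_assoc, ← mul_pow, mul_sum, ← sum_range_reflect]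
  refine sum_congr rfl fun k hk => ?_
  obtain ⟨j, rfl⟩ := Nat.exists_eq_add_of_le' (Nat.lt_succ_iff.mp (mem_range.mp hk))
  rw [Nat.add_sub_cancel, Nat.add_sub_cancel, ← Nat.choose_symm_add, poch_neg_natCast,
    Nat.descFactorial_eq_factorial_mul_choose, neg_div', div_pow]
  have : (j ! : ℂ) ≠ 0 := Nat.cast_ne_zero.mpr j.factorial_ne_zero
  have : (a : ℂ) ≠ 0 := by exact_mod_cast ha
  field_simp
  push_cast
  rw [(by rw [← pow_mul, mul_comm j 2, pow_mul]; simp : ((-1 : ℂ) ^ j) ^ 2 = 1)]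
  ring

-- No hypothesis on `x`: `(Γ s)⁻¹ = s (Γ (s + 1))⁻¹` holds at the poles too, where `Γ` is `0`.
lemma inv_Gamma_neg_eq_poch_mul (x : ℂ) (m : ℕ) :
    (Complex.Gamma (-x))⁻¹ = poch (-x) m * (Complex.Gamma (m - x))⁻¹ := by
  induction m with
  | zero => simp [poch]
  | succ m ih =>
    rw [ih, Complex.one_div_Gamma_eq_self_mul_one_div_Gamma_add_one (m - x), poch_succ]
    push_cast
    ring_nf

lemma choose_mul_poch_mul_inv_Gamma {x : ℂ} (hx : ∀ m : ℕ, x ≠ m) (m k : ℕ) :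
    ((m + k).choose k : ℂ) * poch (-x) m * (Complex.Gamma ((m + k : ℕ) - x))⁻¹ =
      (Complex.Gamma (-x))⁻¹ / k ! *
        ∏ i ∈ range k, (((m + i : ℕ) : ℂ) + 1) / ((m + i : ℕ) - x) := by
  induction k with
  | zero => simp [inv_Gamma_neg_eq_poch_mul x m]
  | succ k ih =>
    have hs : ((m + k : ℕ) : ℂ) - x ≠ 0 := sub_ne_zero.mpr (hx (m + k)).symm
    have hchoose := congrArg (Nat.cast (R := ℂ)) (Nat.add_one_mul_choose_eq (m + k) k)
    calc _ = ((m + k).choose k : ℂ) * poch (-x) m * (Complex.Gamma ((m + k : ℕ) - x))⁻¹ *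
          (((m + k : ℕ) + 1) / ((m + k : ℕ) - x) / (k + 1)) := by
          rw [Complex.one_div_Gamma_eq_self_mul_one_div_Gamma_add_one ((m + k : ℕ) - x),
            show ((m + (k + 1) : ℕ) : ℂ) - x = ((m + k : ℕ) - x) + 1 by push_cast; ring,
            ← add_assoc]
          field_simp
          push_cast at hchoose ⊢
          linear_combination (-(poch (-x) m * (Complex.Gamma (m + k - x + 1))⁻¹)) * hchoose
      _ = _ := by
          rw [ih, prod_range_succ, Nat.factorial_succ]
          push_cast
          field_simp

lemma tendsto_natCast_add_one_div_natCast_sub (x : ℂ) :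
    Tendsto (fun m : ℕ => ((m : ℂ) + 1) / (m - x)) atTop (𝓝 1) := by
  refine ((tendsto_natCast_div_add_atTop (-x - 1)).comp (tendsto_add_atTop_nat 1)).congr fun m => ?_
  simp only [Function.comp_apply]
  push_cast
  ring_nf

noncomputable def charlierTerm (a : ℝ) (x : ℂ) (n k : ℕ) : ℂ :=
  (n.choose k : ℂ) * a ^ k * poch (-x) (n - k) * (Complex.Gamma (n - x))⁻¹

lemma tsum_charlierTerm {a : ℝ} (ha : a ≠ 0) (x : ℂ) (n : ℕ) :
    ∑' k, charlierTerm a x n k = (-1) ^ n * monicCharlier a n x / Complex.Gamma (n - x) := by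
  rw [tsum_eq_sum (s := range (n + 1)) fun k hk => by
      simp [charlierTerm, Nat.choose_eq_zero_of_lt (by simpa using hk : n < k)],
    neg_one_pow_mul_monicCharlier ha, sum_div]
  simp only [charlierTerm, div_eq_mul_inv]

section CharlierTerm

variable (a : ℝ) {x : ℂ}

lemma charlierTerm_add (hx : ∀ m : ℕ, x ≠ m) (m k : ℕ) :
    charlierTerm a x (m + k) k = (a : ℂ) ^ k / k ! * (Complex.Gamma (-x))⁻¹ *
      ∏ i ∈ range k, (((m + i : ℕ) : ℂ) + 1) / ((m + i : ℕ) - x) := by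
  have := choose_mul_poch_mul_inv_Gamma hx m k
  rw [charlierTerm, Nat.add_sub_cancel]
  push_cast at this ⊢
  linear_combination (a : ℂ) ^ k * this

lemma tendsto_charlierTerm (hx : ∀ m : ℕ, x ≠ m) (k : ℕ) :
    Tendsto (charlierTerm a x · k) atTop (𝓝 ((a : ℂ) ^ k / k ! * (Complex.Gamma (-x))⁻¹)) := by
  have hprod : Tendsto (fun m => ∏ i ∈ range k, (((m + i : ℕ) : ℂ) + 1) / ((m + i : ℕ) - x))
      atTop (𝓝 1) := by
    simpa using tendsto_finsetProd (range k) fun i _ =>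
      (tendsto_natCast_add_one_div_natCast_sub x).comp (tendsto_add_atTop_nat i)
  have := (hprod.const_mul ((a : ℂ) ^ k / k ! * (Complex.Gamma (-x))⁻¹)).comp
    (tendsto_sub_atTop_nat k)
  rw [mul_one] at this
  refine this.congr' ?_
  filter_upwards [eventually_ge_atTop k] with n hn
  obtain ⟨m, rfl⟩ := Nat.exists_eq_add_of_le' hn
  simp [charlierTerm_add a hx]

lemma exists_norm_charlierTerm_le (hx : ∀ m : ℕ, x ≠ m) :
    ∃ C, ∀ n k, ‖charlierTerm a x n k‖ ≤ ‖(Complex.Gamma (-x))⁻¹‖ * ((|a| * C) ^ k / k !) := by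
  obtain ⟨C, hC⟩ := isBounded_iff_forall_norm_le.mp
    (Metric.isBounded_range_of_tendsto _ (tendsto_natCast_add_one_div_natCast_sub x))
  refine ⟨C, fun n k => ?_⟩
  rcases le_or_gt k n with h | h
  · obtain ⟨m, rfl⟩ := Nat.exists_eq_add_of_le' h
    have hprod : ∏ i ∈ range k, ‖(((m + i : ℕ) : ℂ) + 1) / ((m + i : ℕ) - x)‖ ≤ C ^ k := by
      simpa using prod_le_prod (s := range k) (fun i _ => norm_nonneg _)
        fun i _ => hC _ (Set.mem_range_self (m + i))
    rw [charlierTerm_add a hx, norm_mul, norm_mul, norm_div, norm_prod, norm_pow,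
      Complex.norm_real, Complex.norm_natCast, Real.norm_eq_abs]
    calc _ ≤ |a| ^ k / k ! * ‖(Complex.Gamma (-x))⁻¹‖ * C ^ k := by gcongr
      _ = _ := by ring
  · have hC0 : 0 ≤ C := (norm_nonneg _).trans (hC _ (Set.mem_range_self 0))
    simp only [charlierTerm, Nat.choose_eq_zero_of_lt h, Nat.cast_zero, zero_mul, norm_zero]
    positivity

end CharlierTerm

lemma tendsto_neg_one_pow_mul_monicCharlier_div_Gamma_of_ne_natCast {a : ℝ} (ha : a ≠ 0) {x : ℂ}
    (hx : ∀ m : ℕ, x ≠ m) :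
    Tendsto (fun n : ℕ => (-1 : ℂ) ^ n * monicCharlier a n x / Complex.Gamma ((n : ℂ) - x))
      atTop (𝓝 ((Real.exp a : ℂ) / Complex.Gamma (-x))) := by
  obtain ⟨C, hC⟩ := exists_norm_charlierTerm_le a hx
  have hlim := tendsto_tsum_of_dominated_convergence
    ((Real.summable_pow_div_factorial (|a| * C)).mul_left _) (tendsto_charlierTerm a hx)
    (Eventually.of_forall hC)
  rwa [tsum_mul_right, (NormedSpace.expSeries_div_hasSum_exp (a : ℂ)).tsum_eq,
    ← Complex.exp_eq_exp_ℂ, ← Complex.ofReal_exp, ← div_eq_mul_inv,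
    funext (tsum_charlierTerm ha x)] at hlim

lemma norm_monicCharlier_natCast_le {a : ℝ} (ha : a ≠ 0) (n p : ℕ) :
    ‖monicCharlier a n p‖ ≤ p ! * (|a| + 1) ^ n := by
  calc ‖monicCharlier a n p‖
      = ‖∑ k ∈ range (n + 1), (n.choose k : ℂ) * a ^ k * poch (-p) (n - k)‖ := by
        rw [← neg_one_pow_mul_monicCharlier ha, norm_mul, norm_pow, norm_neg, norm_one, one_pow,
          one_mul]
    _ ≤ ∑ k ∈ range (n + 1), |a| ^ k * 1 ^ (n - k) * n.choose k * p ! := by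
        refine norm_sum_le_of_le _ fun k _ => ?_
        rw [norm_mul, norm_mul, norm_pow, Complex.norm_real, Complex.norm_natCast,
          Real.norm_eq_abs, one_pow, mul_one, mul_comm (n.choose k : ℝ)]
        gcongr
        exact norm_poch_neg_natCast_le p _
    _ = p ! * (|a| + 1) ^ n := by rw [add_pow, ← sum_mul, mul_comm]

lemma tendsto_pow_div_factorial_sub_atTop (b : ℝ) (p : ℕ) :
    Tendsto (fun n : ℕ => b ^ n / (n - p)!) atTop (𝓝 0) := by
  have := ((FloorSemiring.tendsto_pow_div_factorial_atTop b).comp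
    (tendsto_sub_atTop_nat p)).const_mul (b ^ p)
  rw [mul_zero] at this
  refine this.congr' ?_
  filter_upwards [eventually_ge_atTop p] with n hn
  rw [Function.comp_apply, ← mul_div_assoc, ← pow_add, Nat.add_sub_cancel' hn]

lemma tendsto_neg_one_pow_mul_monicCharlier_natCast_div_Gamma {a : ℝ} (ha : a ≠ 0) (p : ℕ) :
    Tendsto (fun n : ℕ => (-1 : ℂ) ^ n * monicCharlier a n p / Complex.Gamma ((n : ℂ) - p))
      atTop (𝓝 0) := by
  have hlim := (tendsto_pow_div_factorial_sub_atTop (|a| + 1) (p + 1)).const_mul (p ! : ℝ)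
  rw [mul_zero] at hlim
  refine squeeze_zero_norm' ?_ hlim
  filter_upwards [eventually_ge_atTop (p + 1)] with n hn
  obtain ⟨m, rfl⟩ := Nat.exists_eq_add_of_le' hn
  have hGamma : Complex.Gamma (((m + (p + 1) : ℕ) : ℂ) - p) = m ! := by
    rw [← Complex.Gamma_nat_eq_factorial]
    push_cast
    ring_nf
  rw [hGamma, norm_div, norm_mul, norm_pow, norm_neg, norm_one, one_pow, one_mul,
    Complex.norm_natCast, Nat.add_sub_cancel, mul_div_assoc']
  gcongr
  exact norm_monicCharlier_natCast_le ha _ p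

/-- For `a > 0` and every complex `x`,
`lim_{n→∞} (−1)ⁿ Ĉ_n(x;a) / Γ(n−x) = e^a / Γ(−x)`. (Mathlib's `Complex.Gamma` vanishes at
the nonpositive integers, so `e^a / Γ(−x)` is `0` there, as intended.) -/
theorem monic_charlier_mehler_heine (a : ℝ) (ha : 0 < a) (x : ℂ) :
    Tendsto (fun n : ℕ => (-1 : ℂ) ^ n * monicCharlier a n x / Complex.Gamma ((n : ℂ) - x))
      atTop (𝓝 ((Real.exp a : ℂ) / Complex.Gamma (-x))) := by
  by_cases hx : ∃ p : ℕ, x = p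
  · obtain ⟨p, rfl⟩ := hx
    rw [Complex.Gamma_neg_nat_eq_zero, div_zero]
    exact tendsto_neg_one_pow_mul_monicCharlier_natCast_div_Gamma ha.ne' p
  · exact tendsto_neg_one_pow_mul_monicCharlier_div_Gamma_of_ne_natCast ha.ne' (not_exists.mp hx)
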